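/- Let (s_n)_{n≥0} be a real sequence and n₀ ≥ 1 an integer such that the Hankel determinants satisfy D_n > 0 for all n ≤ n₀ − 1 and D_{n₀} = 0. Then the Hankel matrix H_{n₀} = (s_{i+j})_{0≤i,j≤n₀} is positive semi-definite. -/

import Mathlib

/-!
Write a Hermitian matrix in bordered form `H = [[A, b], [bᴴ, d]]` with `A` positive definite.
By the Schur complement, `H` is positive semidefinite iff the `1 × 1` matrix `d - bᴴ A⁻¹ b` is,
i.e. iff `det H = det A * (d - bᴴ A⁻¹ b) ≥ 0`; and a positive semidefinite `H` is positive
definite iff `det H ≠ 0`. Going up the leading principal Hankel blocks, `D_n > 0` for `n < n₀`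
makes `H_{n₀-1}` positive definite, and then `D_{n₀} = 0 ≥ 0` makes `H_{n₀}` semidefinite.
-/

open Matrix

namespace Matrix

variable {m o : Type*}

theorem PosDef.of_isEmpty {R : Type*} [Ring R] [PartialOrder R] [StarRing R] [IsEmpty m]
    (M : Matrix m m R) : M.PosDef :=
  ⟨ext fun i => isEmptyElim i, fun x hx => (hx (Subsingleton.elim x 0)).elim⟩

theorem posSemidef_iff_det_nonneg_of_unique [Unique o] [DecidableEq o] (D : Matrix o o ℝ) :
    D.PosSemidef ↔ 0 ≤ D.det := by
  have hD : D = diagonal fun _ => D default default := by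
    ext i j
    rw [Subsingleton.elim i default, Subsingleton.elim j default, diagonal_apply_eq]
  rw [hD, posSemidef_diagonal_iff, det_diagonal, Fintype.prod_unique]
  exact ⟨fun h => h default, fun h _ => h⟩

variable [Fintype m] [DecidableEq m] [Unique o] [DecidableEq o]

theorem posSemidef_fromBlocks_iff_det_nonneg {A : Matrix m m ℝ} (hA : A.PosDef)
    (B : Matrix m o ℝ) (D : Matrix o o ℝ) :
    (fromBlocks A B Bᴴ D).PosSemidef ↔ 0 ≤ (fromBlocks A B Bᴴ D).det := by
  have := hA.isUnit.invertible
  rw [PosDef.fromBlocks₁₁ B D hA, posSemidef_iff_det_nonneg_of_unique, det_fromBlocks₁₁,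
    invOf_eq_nonsing_inv, mul_nonneg_iff_of_pos_left hA.det_pos]

theorem IsHermitian.posSemidef_iff_det_nonneg_of_posDef_toBlocks₁₁
    {N : Matrix (m ⊕ o) (m ⊕ o) ℝ} (hN : N.IsHermitian) (hA : N.toBlocks₁₁.PosDef) :
    N.PosSemidef ↔ 0 ≤ N.det := by
  have hBC : N.toBlocks₁₂ᴴ = N.toBlocks₂₁ := by
    rw [← fromBlocks_toBlocks N] at hN
    exact (isHermitian_fromBlocks_iff.mp hN).2.1
  rw [← fromBlocks_toBlocks N, ← hBC]
  exact posSemidef_fromBlocks_iff_det_nonneg hA _ _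

variable {n : ℕ} {M : Matrix (Fin (n + 1)) (Fin (n + 1)) ℝ}

theorem IsHermitian.posSemidef_iff_det_nonneg_of_posDef_submatrix_castSucc
    (hM : M.IsHermitian) (hA : (M.submatrix Fin.castSucc Fin.castSucc).PosDef) :
    M.PosSemidef ↔ 0 ≤ M.det := by
  rw [← posSemidef_submatrix_equiv finSumFinEquiv, ← det_submatrix_equiv_self finSumFinEquiv]
  exact (hM.submatrix _).posSemidef_iff_det_nonneg_of_posDef_toBlocks₁₁ hA

theorem IsHermitian.posDef_iff_det_pos_of_posDef_submatrix_castSucc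
    (hM : M.IsHermitian) (hA : (M.submatrix Fin.castSucc Fin.castSucc).PosDef) :
    M.PosDef ↔ 0 < M.det :=
  ⟨PosDef.det_pos, fun h =>
    ((hM.posSemidef_iff_det_nonneg_of_posDef_submatrix_castSucc hA).mpr
      h.le).posDef_iff_det_ne_zero.mpr h.ne'⟩

end Matrix

def hankel (s : ℕ → ℝ) (n : ℕ) : Matrix (Fin (n + 1)) (Fin (n + 1)) ℝ :=
  of fun i j => s (i.1 + j.1)

namespace hankel

variable (s : ℕ → ℝ)

theorem isHermitian (n : ℕ) : (hankel s n).IsHermitian :=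
  ext fun i j => by simp [hankel, add_comm]

theorem submatrix_castSucc (n : ℕ) :
    (hankel s (n + 1)).submatrix Fin.castSucc Fin.castSucc = hankel s n :=
  rfl

variable {s} {n : ℕ}

theorem succ_posDef_iff_det_pos (h : (hankel s n).PosDef) :
    (hankel s (n + 1)).PosDef ↔ 0 < (hankel s (n + 1)).det :=
  (isHermitian s _).posDef_iff_det_pos_of_posDef_submatrix_castSucc
    (by rwa [submatrix_castSucc])

theorem succ_posSemidef_iff_det_nonneg (h : (hankel s n).PosDef) :
    (hankel s (n + 1)).PosSemidef ↔ 0 ≤ (hankel s (n + 1)).det :=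
  (isHermitian s _).posSemidef_iff_det_nonneg_of_posDef_submatrix_castSucc
    (by rwa [submatrix_castSucc])

theorem posDef_of_forall_det_pos (h : ∀ k ≤ n, 0 < (hankel s k).det) : (hankel s n).PosDef := by
  induction n with
  | zero =>
    exact ((isHermitian s 0).posDef_iff_det_pos_of_posDef_submatrix_castSucc
      (PosDef.of_isEmpty _)).mpr (h 0 le_rfl)
  | succ n ih =>
    exact (succ_posDef_iff_det_pos (ih fun k hk => h k (hk.trans n.le_succ))).mpr (h _ le_rfl)

end hankel

/-- If the Hankel determinants of a real sequence satisfy `D n > 0` for `n ≤ n₀ - 1`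
and `D n₀ = 0`, then the Hankel matrix `H n₀` is positive semi-definite. -/
theorem hankel_posSemidef_at_first_zero (s : ℕ → ℝ) (n₀ : ℕ) (hn₀ : 1 ≤ n₀)
    (hpos : ∀ n ≤ n₀ - 1, 0 < (Matrix.of fun i j : Fin (n + 1) => s (i.1 + j.1)).det)
    (hzero : (Matrix.of fun i j : Fin (n₀ + 1) => s (i.1 + j.1)).det = 0) :
    (Matrix.of fun i j : Fin (n₀ + 1) => s (i.1 + j.1)).PosSemidef := by
  obtain ⟨m, rfl⟩ : ∃ m, n₀ = m + 1 := ⟨n₀ - 1, by omega⟩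
  have hA : (hankel s m).PosDef := hankel.posDef_of_forall_det_pos fun k hk => hpos k (by omega)
  exact (hankel.succ_posSemidef_iff_det_nonneg hA).mpr hzero.ge
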